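/- arXiv:1903.07870 — 3 statements merged into one kernel-verified Lean document; each statement's English description precedes it below -/
import Mathlib

section
/- Let X be a real-valued mean-zero random variable and p > q ≥ 1. Suppose C_p := sup over events A of P(A) · |E[X | A]|^p is finite. Then E[|X|^q] ≤ (2 C_p)^(q/p) · p/(p−q). -/
/-!
On the event `{X > t}` the conditional mean of `X` exceeds `t`, so the hypothesis gives
`P(X > t) ≤ C_p / t ^ p`; applied also to `-X` this yields the weak-type tail bound
`P(|X| > t) ≤ 2 C_p / t ^ p`. By the layer-cake formula `E|X|^q = q ∫₀^∞ t^(q-1) P(|X| > t) dt`;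
bounding the probability by `1` below `T = (2 C_p)^(1/p)` and by the tail bound above `T`
gives the claim.
-/

open MeasureTheory Set

def CondMeanBound {Ω : Type*} [MeasurableSpace Ω] (μ : Measure Ω) (X : Ω → ℝ) (p C : ℝ) : Prop :=
  ∀ A : Set Ω, MeasurableSet A → 0 < μ.real A → μ.real A * |(∫ ω in A, X ω ∂μ) / μ.real A| ^ p ≤ C

lemma lintegral_Ioc_rpow {r T : ℝ} (hr : -1 < r) (hT : 0 ≤ T) :
    ∫⁻ t in Ioc 0 T, ENNReal.ofReal (t ^ r) = ENNReal.ofReal (T ^ (r + 1) / (r + 1)) := by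
  have hint : IntegrableOn (fun t : ℝ => t ^ r) (Ioc 0 T) :=
    (intervalIntegrable_iff_integrableOn_Ioc_of_le hT).mp
      (intervalIntegral.intervalIntegrable_rpow' hr)
  rw [← ofReal_integral_eq_lintegral_ofReal hint
    ((ae_restrict_iff' measurableSet_Ioc).mpr (ae_of_all _ fun t ht => Real.rpow_nonneg ht.1.le r)),
    ← intervalIntegral.integral_of_le hT, integral_rpow (Or.inl hr),
    Real.zero_rpow (by linarith), sub_zero]

lemma lintegral_Ioi_rpow {r T : ℝ} (hr : r < -1) (hT : 0 < T) :
    ∫⁻ t in Ioi T, ENNReal.ofReal (t ^ r) = ENNReal.ofReal (-T ^ (r + 1) / (r + 1)) := by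
  rw [← ofReal_integral_eq_lintegral_ofReal (integrableOn_Ioi_rpow_of_lt hr hT)
    ((ae_restrict_iff' measurableSet_Ioi).mpr
      (ae_of_all _ fun t ht => Real.rpow_nonneg (hT.trans ht).le r)),
    integral_Ioi_rpow_of_lt hr hT]

section Tail

variable {Ω : Type*} [MeasurableSpace Ω] {μ : Measure Ω} {p C t : ℝ}

lemma CondMeanBound.neg {X : Ω → ℝ} (hX : CondMeanBound μ X p C) : CondMeanBound μ (-X) p C := by
  intro A hA hpos
  simpa only [Pi.neg_apply, integral_neg, neg_div, abs_neg] using hX A hA hpos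

lemma CondMeanBound.congr {X Y : Ω → ℝ} (hX : CondMeanBound μ X p C) (hXY : X =ᵐ[μ] Y) :
    CondMeanBound μ Y p C := by
  intro A hA hpos
  rw [← integral_congr_ae (ae_restrict_of_ae hXY)]
  exact hX A hA hpos

lemma CondMeanBound.measure_lt_le [IsFiniteMeasure μ] {Y : Ω → ℝ} (hY : CondMeanBound μ Y p C)
    (hYi : Integrable Y μ) (hYm : Measurable Y) (hp : 0 ≤ p) (ht : 0 < t) :
    μ {ω | t < Y ω} ≤ ENNReal.ofReal (C / t ^ p) := by
  set A := {ω | t < Y ω}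
  have hA : MeasurableSet A := measurableSet_lt measurable_const hYm
  rcases eq_or_ne (μ A) 0 with h0 | h0
  · simp [h0]
  have hm : 0 < μ.real A := ENNReal.toReal_pos h0 (measure_ne_top μ A)
  have hmean : t ≤ |(∫ ω in A, Y ω ∂μ) / μ.real A| := by
    rw [le_abs, le_div_iff₀ hm]
    exact Or.inl (setIntegral_ge_of_const_le_real hA (measure_ne_top μ A)
      (fun _ h => h.le) hYi.integrableOn)
  have hmC : μ.real A * t ^ p ≤ C := calc
    μ.real A * t ^ p ≤ μ.real A * |(∫ ω in A, Y ω ∂μ) / μ.real A| ^ p := by gcongr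
    _ ≤ C := hY A hA hm
  rw [← ofReal_measureReal]
  exact ENNReal.ofReal_le_ofReal ((le_div_iff₀ (by positivity)).2 hmC)

lemma CondMeanBound.measure_lt_abs_le [IsFiniteMeasure μ] {X : Ω → ℝ}
    (hX : CondMeanBound μ X p C) (hXi : Integrable X μ) (hp : 0 ≤ p) (hC : 0 ≤ C) (ht : 0 < t) :
    μ {ω | t < |X ω|} ≤ ENNReal.ofReal (2 * C / t ^ p) := by
  obtain ⟨Y, hYm, hXY⟩ := hXi.aestronglyMeasurable
  have hY := hX.congr hXY
  have hYi := hXi.congr hXY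
  have hsets : {ω | t < |X ω|} =ᵐ[μ] ({ω | t < Y ω} ∪ {ω | t < (-Y) ω} : Set Ω) := by
    filter_upwards [hXY] with ω hω
    change (t < |X ω|) = (t < Y ω ∨ t < -Y ω)
    rw [hω, lt_abs]
  calc μ {ω | t < |X ω|} = μ ({ω | t < Y ω} ∪ {ω | t < (-Y) ω}) := measure_congr hsets
    _ ≤ μ {ω | t < Y ω} + μ {ω | t < (-Y) ω} := measure_union_le _ _
    _ ≤ ENNReal.ofReal (C / t ^ p) + ENNReal.ofReal (C / t ^ p) :=
      add_le_add (hY.measure_lt_le hYi hYm.measurable hp ht)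
        (hY.neg.measure_lt_le hYi.neg hYm.measurable.neg hp ht)
    _ = ENNReal.ofReal (2 * C / t ^ p) := by
      rw [← ENNReal.ofReal_add (by positivity) (by positivity)]
      ring_nf

end Tail

section WeakToStrong

variable {Ω : Type*} [MeasurableSpace Ω] {μ : Measure Ω} [IsProbabilityMeasure μ] {X : Ω → ℝ}
  {p q C : ℝ}

lemma lintegral_abs_rpow_le_of_measure_lt_abs_le (hX : AEMeasurable X μ) (hq : 0 < q)
    (hqp : q < p) (hC : 0 ≤ C)
    (htail : ∀ t > 0, μ {ω | t < |X ω|} ≤ ENNReal.ofReal (C / t ^ p)) {T : ℝ} (hT : 0 < T) :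
    ∫⁻ ω, ENNReal.ofReal (|X ω| ^ q) ∂μ
      ≤ ENNReal.ofReal (T ^ q + q * C * T ^ (q - p) / (p - q)) := by
  have hsmall : ∫⁻ t in Ioc 0 T, μ {ω | t < |X ω|} * ENNReal.ofReal (t ^ (q - 1))
      ≤ ENNReal.ofReal (T ^ q / q) := calc
    _ ≤ ∫⁻ t in Ioc 0 T, ENNReal.ofReal (t ^ (q - 1)) :=
      lintegral_mono fun t => mul_le_of_le_one_left' prob_le_one
    _ = ENNReal.ofReal (T ^ q / q) := by
      rw [lintegral_Ioc_rpow (by linarith) hT.le, sub_add_cancel]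
  have hlarge : ∫⁻ t in Ioi T, μ {ω | t < |X ω|} * ENNReal.ofReal (t ^ (q - 1))
      ≤ ENNReal.ofReal C * ENNReal.ofReal (T ^ (q - p) / (p - q)) := calc
    _ ≤ ∫⁻ t in Ioi T, ENNReal.ofReal C * ENNReal.ofReal (t ^ (q - 1 - p)) := by
      refine setLIntegral_mono' measurableSet_Ioi fun t ht => ?_
      have ht0 : 0 < t := hT.trans ht
      calc μ {ω | t < |X ω|} * ENNReal.ofReal (t ^ (q - 1))
          ≤ ENNReal.ofReal (C / t ^ p) * ENNReal.ofReal (t ^ (q - 1)) :=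
            mul_le_mul_left (htail t ht0) _
        _ = ENNReal.ofReal C * ENNReal.ofReal (t ^ (q - 1 - p)) := by
          rw [← ENNReal.ofReal_mul (by positivity), ← ENNReal.ofReal_mul hC,
            Real.rpow_sub ht0 (q - 1) p]
          ring_nf
    _ = ENNReal.ofReal C * ENNReal.ofReal (T ^ (q - p) / (p - q)) := by
      rw [lintegral_const_mul' _ _ ENNReal.ofReal_ne_top, lintegral_Ioi_rpow (by linarith) hT,
        show q - 1 - p + 1 = q - p by ring, neg_div, ← div_neg, neg_sub]
  calc ∫⁻ ω, ENNReal.ofReal (|X ω| ^ q) ∂μ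
      = ENNReal.ofReal q * ((∫⁻ t in Ioc 0 T, μ {ω | t < |X ω|} * ENNReal.ofReal (t ^ (q - 1)))
          + ∫⁻ t in Ioi T, μ {ω | t < |X ω|} * ENNReal.ofReal (t ^ (q - 1))) := by
        rw [lintegral_rpow_eq_lintegral_meas_lt_mul μ (ae_of_all _ fun _ => abs_nonneg _)
            hX.abs hq, ← Ioc_union_Ioi_eq_Ioi hT.le,
          lintegral_union measurableSet_Ioi (Ioc_disjoint_Ioi le_rfl)]
    _ ≤ ENNReal.ofReal q * (ENNReal.ofReal (T ^ q / q)
          + ENNReal.ofReal C * ENNReal.ofReal (T ^ (q - p) / (p - q))) := by gcongr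
    _ = ENNReal.ofReal (T ^ q + q * C * T ^ (q - p) / (p - q)) := by
      have hpq : 0 < p - q := by linarith
      rw [← ENNReal.ofReal_mul hC, ← ENNReal.ofReal_add (by positivity) (by positivity),
        ← ENNReal.ofReal_mul hq.le]
      congr 1
      field_simp

lemma integral_abs_rpow_le_of_measure_lt_abs_le (hX : AEMeasurable X μ) (hq : 0 < q)
    (hqp : q < p) (hC : 0 ≤ C)
    (htail : ∀ t > 0, μ {ω | t < |X ω|} ≤ ENNReal.ofReal (C / t ^ p)) :
    ∫ ω, |X ω| ^ q ∂μ ≤ C ^ (q / p) * (p / (p - q)) := by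
  have hp : 0 < p := hq.trans hqp
  have hpq : 0 < p - q := by linarith
  rw [integral_eq_lintegral_of_nonneg_ae (ae_of_all _ fun _ => by positivity)
    (hX.abs.pow_const q).aestronglyMeasurable]
  refine ENNReal.toReal_le_of_le_ofReal (by positivity) ?_
  rcases hC.eq_or_lt with rfl | hC
  · have hnull : ∀ t ∈ Ioi (0 : ℝ), μ {ω | t < |X ω|} = 0 := fun t ht =>
      le_zero_iff.1 ((htail t ht).trans (by simp))
    rw [lintegral_rpow_eq_lintegral_meas_lt_mul μ (ae_of_all _ fun _ => abs_nonneg _) hX.abs hq,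
      setLIntegral_congr_fun measurableSet_Ioi (g := 0) fun t ht => by simp [hnull t ht]]
    simp
  -- split the layer-cake integral at the optimal point `T = C ^ (1 / p)`
  calc ∫⁻ ω, ENNReal.ofReal (|X ω| ^ q) ∂μ
      ≤ ENNReal.ofReal ((C ^ (1 / p)) ^ q + q * C * (C ^ (1 / p)) ^ (q - p) / (p - q)) :=
        lintegral_abs_rpow_le_of_measure_lt_abs_le hX hq hqp hC.le htail (by positivity)
    _ = ENNReal.ofReal (C ^ (q / p) * (p / (p - q))) := by
        congr 1
        rw [← Real.rpow_mul hC.le, ← Real.rpow_mul hC.le, one_div_mul_eq_div,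
          show 1 / p * (q - p) = q / p - 1 by field_simp, Real.rpow_sub hC, Real.rpow_one]
        field_simp
        ring

end WeakToStrong

theorem stmt1_general {Ω : Type*} [MeasurableSpace Ω] (μ : Measure Ω) [IsProbabilityMeasure μ]
    (X : Ω → ℝ) (p q Cp : ℝ) (hq : 1 ≤ q) (hpq : q < p)
    (hX : Integrable X μ)
    (hCp : ∀ A : Set Ω, MeasurableSet A → 0 < (μ A).toReal →
      (μ A).toReal * |(∫ ω in A, X ω ∂μ) / (μ A).toReal| ^ p ≤ Cp) :
    ∫ ω, |X ω| ^ q ∂μ ≤ (2 * Cp) ^ (q / p) * (p / (p - q)) := by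
  have hq0 : 0 < q := by linarith
  have hbound : CondMeanBound μ X p Cp := hCp
  have hCp0 : 0 ≤ Cp := le_trans (by positivity) (hbound univ .univ (by simp))
  exact integral_abs_rpow_le_of_measure_lt_abs_le hX.aemeasurable hq0 hpq (by positivity)
    fun t ht => hbound.measure_lt_abs_le hX (by linarith) hCp0 ht

theorem stmt1 {Ω : Type*} [MeasurableSpace Ω] (μ : Measure Ω) [IsProbabilityMeasure μ]
    (X : Ω → ℝ) (p q Cp : ℝ) (hq : 1 ≤ q) (hpq : q < p)
    (hX : Integrable X μ) (hmean : ∫ ω, X ω ∂μ = 0)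
    (hCp : ∀ A : Set Ω, MeasurableSet A → 0 < (μ A).toReal →
      (μ A).toReal * |(∫ ω in A, X ω ∂μ) / (μ A).toReal| ^ p ≤ Cp) :
    ∫ ω, |X ω| ^ q ∂μ ≤ (2 * Cp) ^ (q / p) * (p / (p - q)) :=
  stmt1_general μ X p q Cp hq hpq hX hCp
end

section
/- Let X be a mean-zero real random variable, p > 0, and suppose that for every event A with P(A) > 0 one has P(A) · |E[X | A]|^p ≤ C. Then for every t > 0, P(|X| ≥ t) ≤ 2C / t^p. -/
/-! Split `{t ≤ |X|}` into the tails `{t ≤ X}` and `{t ≤ -X}`. On each tail the average of `X`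
has absolute value at least `t`, so the hypothesis applied to that tail bounds its probability
by `C / t ^ p`. -/

open MeasureTheory

lemma le_div_rpow_of_mul_le_abs {m I t p C : ℝ} (hm : 0 ≤ m) (ht : 0 < t) (hp : 0 ≤ p)
    (hC : 0 ≤ C) (hbound : 0 < m → m * |I / m| ^ p ≤ C) (hI : t * m ≤ |I|) :
    m ≤ C / t ^ p := by
  rcases hm.eq_or_lt with rfl | hm
  · positivity
  have havg : t ≤ |I / m| := by
    rwa [abs_div, abs_of_pos hm, le_div_iff₀ hm]
  rw [le_div_iff₀ (Real.rpow_pos_of_pos ht p)]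
  calc m * t ^ p ≤ m * |I / m| ^ p := by gcongr
    _ ≤ C := hbound hm

lemma setOf_le_abs_eq_union {Ω : Type*} (X : Ω → ℝ) (t : ℝ) :
    {ω | t ≤ |X ω|} = {ω | t ≤ X ω} ∪ {ω | t ≤ -X ω} := by
  ext ω
  simp only [Set.mem_ofPred_eq, Set.mem_union]
  exact le_abs

section Tails

variable {Ω : Type*} [MeasurableSpace Ω] {μ : Measure Ω} [IsFiniteMeasure μ] {X : Ω → ℝ}

lemma mul_measureReal_le_setIntegral_of_le (hXm : Measurable X) (hX : Integrable X μ) (t : ℝ) :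
    t * μ.real {ω | t ≤ X ω} ≤ ∫ ω in {ω | t ≤ X ω}, X ω ∂μ :=
  setIntegral_ge_of_const_le_real (measurableSet_le measurable_const hXm) (measure_ne_top _ _)
    (fun _ hω => hω) hX.integrableOn

lemma mul_measureReal_le_abs_setIntegral_of_le (hXm : Measurable X) (hX : Integrable X μ)
    (t : ℝ) : t * μ.real {ω | t ≤ X ω} ≤ |∫ ω in {ω | t ≤ X ω}, X ω ∂μ| :=
  (mul_measureReal_le_setIntegral_of_le hXm hX t).trans (le_abs_self _)

lemma mul_measureReal_le_abs_setIntegral_of_le_neg (hXm : Measurable X) (hX : Integrable X μ)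
    (t : ℝ) : t * μ.real {ω | t ≤ -X ω} ≤ |∫ ω in {ω | t ≤ -X ω}, X ω ∂μ| := by
  simpa only [integral_neg, abs_neg] using
    mul_measureReal_le_abs_setIntegral_of_le (X := fun ω => -X ω) hXm.neg hX.neg t

theorem measureReal_le_abs_le_two_mul_div_rpow (hXm : Measurable X) (hX : Integrable X μ) {p C t : ℝ}
    (hp : 0 ≤ p) (hC : 0 ≤ C) (ht : 0 < t)
    (hdev : ∀ A : Set Ω, MeasurableSet A → 0 < μ.real A →
      μ.real A * |(∫ ω in A, X ω ∂μ) / μ.real A| ^ p ≤ C) :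
    μ.real {ω | t ≤ |X ω|} ≤ 2 * C / t ^ p := by
  have hupper : μ.real {ω | t ≤ X ω} ≤ C / t ^ p :=
    le_div_rpow_of_mul_le_abs measureReal_nonneg ht hp hC
      (hdev _ (measurableSet_le measurable_const hXm))
      (mul_measureReal_le_abs_setIntegral_of_le hXm hX t)
  have hlower : μ.real {ω | t ≤ -X ω} ≤ C / t ^ p :=
    le_div_rpow_of_mul_le_abs measureReal_nonneg ht hp hC
      (hdev _ (measurableSet_le measurable_const hXm.neg))
      (mul_measureReal_le_abs_setIntegral_of_le_neg hXm hX t)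
  calc μ.real {ω | t ≤ |X ω|} ≤ μ.real {ω | t ≤ X ω} + μ.real {ω | t ≤ -X ω} := by
        rw [setOf_le_abs_eq_union]
        exact measureReal_union_le _ _
    _ ≤ C / t ^ p + C / t ^ p := add_le_add hupper hlower
    _ = 2 * C / t ^ p := by ring

end Tails

theorem stmt2_general {Ω : Type*} [MeasurableSpace Ω] (μ : Measure Ω) [IsProbabilityMeasure μ]
    (X : Ω → ℝ) (p C : ℝ) (hp : 0 < p)
    (hX : Integrable X μ)
    (hdev : ∀ A : Set Ω, MeasurableSet A → 0 < (μ A).toReal →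
      (μ A).toReal * |(∫ ω in A, X ω ∂μ) / (μ A).toReal| ^ p ≤ C) :
    ∀ t : ℝ, 0 < t → (μ {ω | t ≤ |X ω|}).toReal ≤ 2 * C / t ^ p := by
  intro t ht
  have hC : 0 ≤ C := by
    have := hdev Set.univ MeasurableSet.univ (by simp)
    exact le_trans (by positivity) this
  set Y := hX.1.mk X
  have hXY : X =ᵐ[μ] Y := hX.1.ae_eq_mk
  have hdevY : ∀ A : Set Ω, MeasurableSet A → 0 < μ.real A →
      μ.real A * |(∫ ω in A, Y ω ∂μ) / μ.real A| ^ p ≤ C := fun A hA hpos => by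
    rw [← setIntegral_congr_ae₀ hA.nullMeasurableSet (hXY.mono fun _ h _ => h)]
    exact hdev A hA hpos
  have htail : {ω | t ≤ |X ω|} =ᵐ[μ] {ω | t ≤ |Y ω|} := by
    filter_upwards [hXY] with ω h
    change (t ≤ |X ω|) = (t ≤ |Y ω|)
    rw [h]
  rw [measure_congr htail]
  exact measureReal_le_abs_le_two_mul_div_rpow hX.1.stronglyMeasurable_mk.measurable (hX.congr hXY)
    hp.le hC ht hdevY

theorem stmt2 {Ω : Type*} [MeasurableSpace Ω] (μ : Measure Ω) [IsProbabilityMeasure μ]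
    (X : Ω → ℝ) (p C : ℝ) (hp : 0 < p) (hC : 0 < C)
    (hX : Integrable X μ) (hmean : ∫ ω, X ω ∂μ = 0)
    (hdev : ∀ A : Set Ω, MeasurableSet A → 0 < (μ A).toReal →
      (μ A).toReal * |(∫ ω in A, X ω ∂μ) / (μ A).toReal| ^ p ≤ C) :
    ∀ t : ℝ, 0 < t → (μ {ω | t ≤ |X ω|}).toReal ≤ 2 * C / t ^ p :=
  stmt2_general μ X p C hp hX hdev
end

section
/- Let G be a symmetric doubly stochastic n×n matrix, Π the spectral projection onto eigenvalues of G at least 1/2, and let B = √n · A where AAᵀ = Π (so the rows b_1,…,b_n of B are the isotropic spectral embedding). Then for every nonempty subset T of [n], ‖(1/|T|) Σ_{i∈T} b_i‖² ≥ (n/|T|) · (1/2 − Φ_G(T)), where Φ_G(T) = 1 − ⟨1_T, G 1_T⟩/|T|. -/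
/-!
Expand `x = 1_T` in the orthonormal eigenbasis `vᵢ` of `G`, with coefficients `cᵢ = ⟨x, vᵢ⟩`.
Then `⟨x, G x⟩ - |T|/2 = ∑ (λᵢ - 1/2) cᵢ²`; a term with `λᵢ ≥ 1/2` is at most `cᵢ²` since
`λᵢ ≤ 1`, and the other terms are negative, so the sum is at most `∑_{λᵢ ≥ 1/2} cᵢ² = ⟨x, Π x⟩`.
Finally `⟨x, Π x⟩ = ‖Aᵀ x‖² = ‖∑_{i ∈ T} Aᵢ‖²`, and rescaling by `n / |T|²` gives the bound.
-/

open Matrix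

section QuadraticForm

variable {m R : Type*} [Fintype m] [CommSemiring R]

lemma dotProduct_sum_mul_dotProduct_smul (v : m → m → R) (c : m → R) (x : m → R) :
    x ⬝ᵥ ∑ i, (c i * (x ⬝ᵥ v i)) • v i = ∑ i, c i * (x ⬝ᵥ v i) ^ 2 := by
  simp only [dotProduct_sum, dotProduct_smul, smul_eq_mul]
  exact Finset.sum_congr rfl fun i _ => by ring

lemma dotProduct_vecMulVec_self_mulVec (u x : m → R) :
    x ⬝ᵥ vecMulVec u u *ᵥ x = (x ⬝ᵥ u) ^ 2 := by
  rw [dotProduct_mulVec, vecMul_vecMulVec, smul_dotProduct, smul_eq_mul, sq, dotProduct_comm u x]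

lemma dotProduct_sum_ite_vecMulVec_mulVec (p : m → Prop) [DecidablePred p] (v : m → m → R)
    (x : m → R) :
    x ⬝ᵥ (∑ i, if p i then vecMulVec (v i) (v i) else 0) *ᵥ x =
      ∑ i, if p i then (x ⬝ᵥ v i) ^ 2 else 0 := by
  simp only [sum_mulVec, dotProduct_sum, apply_ite (· *ᵥ x), apply_ite (x ⬝ᵥ ·),
    zero_mulVec, dotProduct_zero, dotProduct_vecMulVec_self_mulVec]

end QuadraticForm

section Orthonormal

variable {m R : Type*} [Fintype m] [DecidableEq m] [CommRing R]

/-- A one-sided inverse of a square matrix is two-sided, so `card m` orthonormal vectors span. -/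
lemma transpose_mul_self_eq_one_of_orthonormal (v : m → m → R)
    (hv : ∀ i j, v i ⬝ᵥ v j = if i = j then 1 else 0) : (of v)ᵀ * of v = 1 := by
  refine mul_eq_one_comm.mp (ext fun i j => ?_)
  simp [mul_apply, one_apply, ← hv i j, dotProduct]

lemma sum_dotProduct_smul_of_orthonormal (v : m → m → R)
    (hv : ∀ i j, v i ⬝ᵥ v j = if i = j then 1 else 0) (x : m → R) :
    ∑ i, (x ⬝ᵥ v i) • v i = x := by
  have h := congrArg (· *ᵥ x) (transpose_mul_self_eq_one_of_orthonormal v hv)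
  simp only [← mulVec_mulVec, one_mulVec, mulVec_transpose, vecMul_eq_sum] at h
  exact (Finset.sum_congr rfl fun i _ => by rw [dotProduct_comm]; rfl).trans h

lemma dotProduct_self_eq_sum_sq_of_orthonormal (v : m → m → R)
    (hv : ∀ i j, v i ⬝ᵥ v j = if i = j then 1 else 0) (x : m → R) :
    x ⬝ᵥ x = ∑ i, (x ⬝ᵥ v i) ^ 2 := by
  simpa only [Pi.one_apply, one_mul, sum_dotProduct_smul_of_orthonormal v hv] using
    dotProduct_sum_mul_dotProduct_smul v 1 x

lemma dotProduct_mulVec_eq_sum_of_eigenvectors (G : Matrix m m R)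
    (v : m → m → R) (hv : ∀ i j, v i ⬝ᵥ v j = if i = j then 1 else 0)
    (lam : m → R) (heig : ∀ i, G *ᵥ v i = lam i • v i) (x : m → R) :
    x ⬝ᵥ G *ᵥ x = ∑ i, lam i * (x ⬝ᵥ v i) ^ 2 := by
  have hGx : G *ᵥ x = ∑ i, (lam i * (x ⬝ᵥ v i)) • v i := by
    conv_lhs => rw [← sum_dotProduct_smul_of_orthonormal v hv x]
    simp only [mulVec_sum, mulVec_smul, heig, smul_smul, mul_comm]
  rw [hGx, dotProduct_sum_mul_dotProduct_smul]

end Orthonormal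

lemma mul_sub_half_le_ite {l c : ℝ} (hl : l ≤ 1) :
    l * c ^ 2 - c ^ 2 / 2 ≤ if 1 / 2 ≤ l then c ^ 2 else 0 := by
  split_ifs <;> nlinarith [sq_nonneg c]

theorem dotProduct_mulVec_sub_half_le_projection {m : Type*} [Fintype m] [DecidableEq m]
    (G : Matrix m m ℝ) (v : m → m → ℝ) (hv : ∀ i j, v i ⬝ᵥ v j = if i = j then 1 else 0)
    (lam : m → ℝ) (hlam : ∀ i, lam i ≤ 1) (heig : ∀ i, G *ᵥ v i = lam i • v i) (x : m → ℝ) :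
    x ⬝ᵥ G *ᵥ x - x ⬝ᵥ x / 2 ≤
      x ⬝ᵥ (∑ i, if 1 / 2 ≤ lam i then vecMulVec (v i) (v i) else 0) *ᵥ x := by
  rw [dotProduct_mulVec_eq_sum_of_eigenvectors G v hv lam heig,
    dotProduct_self_eq_sum_sq_of_orthonormal v hv, dotProduct_sum_ite_vecMulVec_mulVec,
    Finset.sum_div, ← Finset.sum_sub_distrib]
  exact Finset.sum_le_sum fun i _ => mul_sub_half_le_ite (hlam i)

section Indicator

variable {m n R : Type*} [Fintype m] [DecidableEq m] [CommSemiring R] (T : Finset m)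

lemma indicator_vecMul (A : Matrix m n R) :
    (fun i => if i ∈ T then (1 : R) else 0) ᵥ* A = ∑ i ∈ T, A i := by
  simp only [vecMul_eq_sum, ite_smul, one_smul, zero_smul]
  exact Finset.sum_ite_mem_eq T A

lemma indicator_dotProduct_indicator :
    (fun i => if i ∈ T then (1 : R) else 0) ⬝ᵥ (fun i => if i ∈ T then 1 else 0) = T.card := by
  simp [dotProduct, Finset.sum_ite_mem]

end Indicator

lemma vecMul_dotProduct_vecMul_self {m n R : Type*} [Fintype m] [Fintype n] [CommSemiring R]
    (A : Matrix m n R) (x : m → R) : (x ᵥ* A) ⬝ᵥ (x ᵥ* A) = x ⬝ᵥ (A * Aᵀ) *ᵥ x := by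
  rw [← mulVec_mulVec, dotProduct_mulVec, mulVec_transpose]

lemma div_mul_half_sub_le {n k q p : ℝ} (hn : 0 ≤ n) (hk : 0 ≤ k) (h : q - k / 2 ≤ p) :
    n / k * (1 / 2 - (1 - q / k)) ≤ n * p / k ^ 2 := by
  rcases hk.eq_or_lt with rfl | hk
  · simp
  rw [le_div_iff₀ (by positivity)]
  have : n / k * (1 / 2 - (1 - q / k)) * k ^ 2 = n * (q - k / 2) := by field_simp; ring
  rw [this]
  exact mul_le_mul_of_nonneg_left h hn

theorem stmt8_general {n d : ℕ} (G : Matrix (Fin n) (Fin n) ℝ)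
    (v : Fin n → Fin n → ℝ)
    (hortho : ∀ i j, v i ⬝ᵥ v j = if i = j then (1 : ℝ) else 0)
    (lam : Fin n → ℝ) (hlam : ∀ i, |lam i| ≤ 1)
    (heig : ∀ i, G.mulVec (v i) = lam i • v i)
    (P : Matrix (Fin n) (Fin n) ℝ)
    (hP : P = ∑ i, if (1 : ℝ) / 2 ≤ lam i then vecMulVec (v i) (v i) else 0)
    (A : Matrix (Fin n) (Fin d) ℝ) (hA : A * Aᵀ = P)
    (b : Fin n → Fin d → ℝ) (hb : ∀ i, b i = Real.sqrt n • A i)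
    (T : Finset (Fin n)) :
    ((n : ℝ) / T.card) *
        (1 / 2 - (1 - ((fun i => if i ∈ T then (1 : ℝ) else 0) ⬝ᵥ
          G.mulVec (fun i => if i ∈ T then (1 : ℝ) else 0)) / T.card)) ≤
      ((T.card : ℝ)⁻¹ • ∑ i ∈ T, b i) ⬝ᵥ ((T.card : ℝ)⁻¹ • ∑ i ∈ T, b i) := by
  have hspec := dotProduct_mulVec_sub_half_le_projection G v hortho lam
    (fun i => (abs_le.mp (hlam i)).2) heig (fun i => if i ∈ T then (1 : ℝ) else 0)
  rw [← hP, ← hA, indicator_dotProduct_indicator, ← vecMul_dotProduct_vecMul_self,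
    indicator_vecMul] at hspec
  have hbsum : ∑ i ∈ T, b i = √n • ∑ i ∈ T, A i :=
    (Finset.sum_congr rfl fun i _ => hb i).trans Finset.smul_sum.symm
  have hnorm : ((T.card : ℝ)⁻¹ • ∑ i ∈ T, b i) ⬝ᵥ ((T.card : ℝ)⁻¹ • ∑ i ∈ T, b i) =
      n * ((∑ i ∈ T, A i) ⬝ᵥ (∑ i ∈ T, A i)) / T.card ^ 2 := by
    rw [hbsum, smul_smul, smul_dotProduct, dotProduct_smul, smul_eq_mul, smul_eq_mul,
      ← mul_assoc, mul_mul_mul_comm, Real.mul_self_sqrt n.cast_nonneg]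
    ring
  rw [hnorm]
  exact div_mul_half_sub_le n.cast_nonneg T.card.cast_nonneg hspec

theorem stmt8 {n d : ℕ} (G : Matrix (Fin n) (Fin n) ℝ) (hGsymm : G.IsSymm)
    (v : Fin n → Fin n → ℝ)
    (hortho : ∀ i j, v i ⬝ᵥ v j = if i = j then (1 : ℝ) else 0)
    (lam : Fin n → ℝ) (hlam : ∀ i, |lam i| ≤ 1)
    (heig : ∀ i, G.mulVec (v i) = lam i • v i)
    (P : Matrix (Fin n) (Fin n) ℝ)
    (hP : P = ∑ i, if (1 : ℝ) / 2 ≤ lam i then vecMulVec (v i) (v i) else 0)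
    (A : Matrix (Fin n) (Fin d) ℝ) (hA : A * Aᵀ = P)
    (b : Fin n → Fin d → ℝ) (hb : ∀ i, b i = Real.sqrt n • A i)
    (T : Finset (Fin n)) (hT : T.Nonempty) :
    ((n : ℝ) / T.card) *
        (1 / 2 - (1 - ((fun i => if i ∈ T then (1 : ℝ) else 0) ⬝ᵥ
          G.mulVec (fun i => if i ∈ T then (1 : ℝ) else 0)) / T.card)) ≤
      ((T.card : ℝ)⁻¹ • ∑ i ∈ T, b i) ⬝ᵥ ((T.card : ℝ)⁻¹ • ∑ i ∈ T, b i) :=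
  stmt8_general G v hortho lam hlam heig P hP A hA b hb T
end
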